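/- Let φ : ℝ^d × ℝ^d → [0,∞] be a symmetric measurable pair potential, β > 0, z > 0, and suppose there are α > 0 and a measurable A ⊆ ℝ^d with B(0,α) ⊆ A such that φ(x,y) = +∞ whenever x − y ∈ A (hard core, assumption (A1)). Let a > 0 with a√d ≤ α. Call a countable set γ ⊆ ℝ^d authorised if x − y ∉ A for all distinct x, y ∈ γ. For i ∈ ℤ^d and an authorised γ ⊆ ℝ^d ∖ Λ_{a,i}, let h_γ(x) := e^{−β Σ_{y∈γ} φ(x,y)} ∈ [0,1] (with e^{−∞} = 0) and let μ_γ := μ_{h_γ} be the associated single-site specification measure on {∗} ⊔ ℝ^d with Λ := Λ_{a,i}. Then for every i ∈ ℤ^d: Σ_{j∈ℤ^d, j≠i} sup{ d_TV(μ_γ, μ_{γ̃}) : γ, γ̃ ⊆ ℝ^d ∖ Λ_{a,i} authorised, with γ ∖ Λ_{a,j} = γ̃ ∖ Λ_{a,j} } ≤ z · sup_{x∈ℝ^d} ∫_{ℝ^d} Ψ_a(x,y) dy. -/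

import Mathlib

/-!
Since `μ_h(B) = (1_B(∗) + z ∫_{B ∩ Λ} h) / (1 + z ∫_Λ h)`, the total variation distance between
two single-site specifications is at most `z ∫_Λ |h − h'|`. If `γ` and `γ'` agree outside
`Λ_{a,j}`, then `h_γ` and `h_γ'` share the factor coming from `γ ∖ Λ_{a,j}`; as two points of
`Λ_{a,j}` are at distance `< a√d ≤ α`, an authorised configuration has at most one point in
`Λ_{a,j}`, so `|h_γ(x) − h_γ'(x)| ≤ sup_{y ∈ Λ_{a,j}} (1 − e^{−βφ(x,y)})`. Summing over `j` gives
`a^{−d} ∫ Ψ_a(x,y) dy`, and integrating over `x ∈ Λ_{a,i}` multiplies by `|Λ_{a,i}| = a^d`.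
-/

open MeasureTheory ENNReal

/-- The half-open cube `Λ_{a,j} = a j + (−a/2, a/2]^d` of side `a` centred at `a j`. -/
def cube (d : ℕ) (a : ℝ) (j : Fin d → ℤ) : Set (EuclideanSpace ℝ (Fin d)) :=
  {x | ∀ k : Fin d, x k - a * (j k : ℝ) ∈ Set.Ioc (-(a / 2)) (a / 2)}

/-- `expNegE t = e^{−t}` for `t ∈ [0,∞]` as an element of `[0,∞]`, with `e^{−∞} = 0`. -/
noncomputable def expNegE (t : ℝ≥0∞) : ℝ≥0∞ :=
  if t = ∞ then 0 else ENNReal.ofReal (Real.exp (-t.toReal))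

/-- The Mayer function `(x,y) ↦ 1 − e^{−βφ(x,y)}`, valued in `[0,∞]` (in fact `[0,1]`). -/
noncomputable def mayer {d : ℕ}
    (φ : EuclideanSpace ℝ (Fin d) → EuclideanSpace ℝ (Fin d) → ℝ≥0∞) (β : ℝ)
    (x y : EuclideanSpace ℝ (Fin d)) : ℝ≥0∞ :=
  1 - expNegE (ENNReal.ofReal β * φ x y)

/-- The discretised Mayer majorant
`Ψ_a(x,y) = Σ_{j∈ℤ^d} 1_{y ∈ Λ_{a,j}} · sup_{y' ∈ Λ_{a,j}} (1 − e^{−βφ(x,y')})`. -/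
noncomputable def Psi {d : ℕ}
    (φ : EuclideanSpace ℝ (Fin d) → EuclideanSpace ℝ (Fin d) → ℝ≥0∞) (β : ℝ) (a : ℝ)
    (x y : EuclideanSpace ℝ (Fin d)) : ℝ≥0∞ :=
  ∑' j : Fin d → ℤ,
    (cube d a j).indicator (fun _ => ⨆ y' ∈ cube d a j, mayer φ β x y') y

/-- `expNegR t = e^{−t}` for `t ∈ [0,∞]`, with the convention `e^{−∞} = 0`. -/
noncomputable def expNegR (t : ℝ≥0∞) : ℝ :=
  if t = ∞ then 0 else Real.exp (-t.toReal)

/-- The Boltzmann weight `h_γ(x) = e^{−β Σ_{y∈γ} φ(x,y)} ∈ [0,1]` of the configuration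
with a single point at `x`, given the boundary condition `γ`. -/
noncomputable def hweight {d : ℕ}
    (φ : EuclideanSpace ℝ (Fin d) → EuclideanSpace ℝ (Fin d) → ℝ≥0∞) (β : ℝ)
    (γ : Set (EuclideanSpace ℝ (Fin d))) (x : EuclideanSpace ℝ (Fin d)) : ℝ :=
  expNegR (ENNReal.ofReal β * ∑' y : γ, φ x y)

/-- The partition function `Z(h) = e^{−z|Λ|} (1 + z ∫_Λ h)`. -/
noncomputable def Zpart {d : ℕ} (Λ : Set (EuclideanSpace ℝ (Fin d))) (z : ℝ)
    (h : EuclideanSpace ℝ (Fin d) → ℝ) : ℝ :=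
  Real.exp (-z * (volume Λ).toReal) * (1 + z * ∫ x in Λ, h x)

/-- The single-site specification measure `μ_h` on `{∗} ⊔ ℝ^d`: it puts mass
`e^{−z|Λ|}/Z(h)` on the atom `∗` (the empty configuration) and has density
`z e^{−z|Λ|} h(x)/Z(h)` w.r.t. Lebesgue measure on `Λ`. -/
noncomputable def specMeasure {d : ℕ} (Λ : Set (EuclideanSpace ℝ (Fin d))) (z : ℝ)
    (h : EuclideanSpace ℝ (Fin d) → ℝ) :
    Measure (Unit ⊕ EuclideanSpace ℝ (Fin d)) :=
  (ENNReal.ofReal (Real.exp (-z * (volume Λ).toReal) / Zpart Λ z h)) •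
      Measure.dirac (Sum.inl ()) +
    Measure.map Sum.inr
      ((volume.restrict Λ).withDensity fun x =>
        ENNReal.ofReal (z * Real.exp (-z * (volume Λ).toReal) * h x / Zpart Λ z h))

/-- Total variation distance between two measures, valued in `ℝ≥0∞`:
`sup_B |μ(B) − ν(B)|`, expressed with truncated subtraction. -/
noncomputable def tvEDist {Ω : Type*} [MeasurableSpace Ω] (μ ν : Measure Ω) : ℝ≥0∞ :=
  ⨆ B : {B : Set Ω // MeasurableSet B}, (μ B - ν B) ⊔ (ν B - μ B)

/-- A configuration `γ` is authorised (w.r.t. the hard-core exclusion region `A`)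
if no two distinct points of `γ` have their difference in `A`. -/
def Authorised {d : ℕ} (A : Set (EuclideanSpace ℝ (Fin d)))
    (γ : Set (EuclideanSpace ℝ (Fin d))) : Prop :=
  ∀ x ∈ γ, ∀ y ∈ γ, x ≠ y → x - y ∉ A

-- No measurability is assumed, since `x ↦ ⨆ y ∈ cube d a j, mayer φ β x y` need not be
-- measurable.
lemma tsum_lintegral_le {X ι : Type*} [MeasurableSpace X] [Countable ι] (μ : Measure X)
    (f : ι → X → ℝ≥0∞) : ∑' j, ∫⁻ x, f j x ∂μ ≤ ∫⁻ x, ∑' j, f j x ∂μ := by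
  choose g hgm hgf hg using fun j ↦ exists_measurable_le_lintegral_eq μ (f j)
  calc ∑' j, ∫⁻ x, f j x ∂μ = ∫⁻ x, ∑' j, g j x ∂μ := by
        rw [lintegral_tsum fun j ↦ (hgm j).aemeasurable]
        exact tsum_congr hg
    _ ≤ ∫⁻ x, ∑' j, f j x ∂μ := lintegral_mono fun x ↦ ENNReal.tsum_le_tsum fun j ↦ hgf j x

lemma expNegR_nonneg (t : ℝ≥0∞) : 0 ≤ expNegR t := by
  unfold expNegR; split_ifs
  exacts [le_rfl, (Real.exp_pos _).le]

lemma expNegR_le_one (t : ℝ≥0∞) : expNegR t ≤ 1 := by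
  unfold expNegR; split_ifs
  exacts [zero_le_one, Real.exp_le_one_iff.mpr (neg_nonpos.mpr ENNReal.toReal_nonneg)]

lemma expNegR_add (s t : ℝ≥0∞) : expNegR (s + t) = expNegR s * expNegR t := by
  unfold expNegR
  rcases eq_or_ne s ∞ with rfl | hs
  · simp
  rcases eq_or_ne t ∞ with rfl | ht
  · simp
  rw [if_neg (ENNReal.add_ne_top.mpr ⟨hs, ht⟩), if_neg hs, if_neg ht, ENNReal.toReal_add hs ht,
    neg_add, Real.exp_add]

lemma ofReal_one_sub_expNegR (t : ℝ≥0∞) :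
    ENNReal.ofReal (1 - expNegR t) = 1 - expNegE t := by
  rw [ENNReal.ofReal_sub _ (expNegR_nonneg t), ENNReal.ofReal_one]
  unfold expNegR expNegE; split_ifs <;> simp

lemma measurable_expNegR : Measurable expNegR :=
  Measurable.ite (MeasurableSet.singleton ∞) measurable_const
    (Real.measurable_exp.comp ENNReal.measurable_toReal.neg)

section Weight

variable {d : ℕ} (φ : EuclideanSpace ℝ (Fin d) → EuclideanSpace ℝ (Fin d) → ℝ≥0∞) (β : ℝ)

lemma hweight_nonneg (γ : Set (EuclideanSpace ℝ (Fin d))) (x : EuclideanSpace ℝ (Fin d)) :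
    0 ≤ hweight φ β γ x :=
  expNegR_nonneg _

lemma hweight_le_one (γ : Set (EuclideanSpace ℝ (Fin d))) (x : EuclideanSpace ℝ (Fin d)) :
    hweight φ β γ x ≤ 1 :=
  expNegR_le_one _

variable {φ} in
lemma measurable_hweight (hφ : Measurable (Function.uncurry φ))
    {γ : Set (EuclideanSpace ℝ (Fin d))} (hγ : γ.Countable) : Measurable (hweight φ β γ) :=
  have := hγ.to_subtype
  measurable_expNegR.comp <| .const_mul (.tsum fun _ ↦
    hφ.comp (measurable_id.prodMk measurable_const)) _

lemma hweight_eq_mul_diff_inter (γ c : Set (EuclideanSpace ℝ (Fin d)))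
    (x : EuclideanSpace ℝ (Fin d)) :
    hweight φ β γ x = hweight φ β (γ \ c) x * hweight φ β (γ ∩ c) x := by
  have hdisj : Disjoint (γ \ c) (γ ∩ c) := Set.disjoint_sdiff_inter
  rw [hweight, hweight, hweight, ← expNegR_add, ← mul_add,
    ← ENNReal.summable.tsum_union_disjoint hdisj ENNReal.summable, Set.sdiff_union_inter]

lemma ofReal_one_sub_hweight_le {γ : Set (EuclideanSpace ℝ (Fin d))} (hγ : γ.Subsingleton)
    (x : EuclideanSpace ℝ (Fin d)) :
    ENNReal.ofReal (1 - hweight φ β γ x) ≤ ⨆ y ∈ γ, mayer φ β x y := by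
  rcases hγ.eq_empty_or_singleton with rfl | ⟨y, rfl⟩
  · simp [hweight, expNegR]
  · rw [hweight, tsum_singleton y (φ x), ofReal_one_sub_expNegR]
    exact le_iSup₂_of_le y rfl le_rfl

lemma abs_sub_le_max_one_sub {s t : ℝ} (hs : s ≤ 1) (ht : t ≤ 1) :
    |s - t| ≤ max (1 - s) (1 - t) := by
  rw [abs_le]; constructor <;> cases max_cases (1 - s) (1 - t) <;> linarith

lemma ofReal_abs_hweight_sub_le {γ γ' c : Set (EuclideanSpace ℝ (Fin d))}
    (hagree : γ \ c = γ' \ c) (hγ : (γ ∩ c).Subsingleton) (hγ' : (γ' ∩ c).Subsingleton)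
    (x : EuclideanSpace ℝ (Fin d)) :
    ENNReal.ofReal |hweight φ β γ x - hweight φ β γ' x| ≤ ⨆ y ∈ c, mayer φ β x y := by
  have hpiece : ∀ δ : Set (EuclideanSpace ℝ (Fin d)), (δ ∩ c).Subsingleton →
      ENNReal.ofReal (1 - hweight φ β (δ ∩ c) x) ≤ ⨆ y ∈ c, mayer φ β x y := fun δ hδ ↦
    (ofReal_one_sub_hweight_le φ β hδ x).trans (biSup_mono fun _ hy ↦ hy.2)
  have hbound : |hweight φ β γ x - hweight φ β γ' x| ≤
      max (1 - hweight φ β (γ ∩ c) x) (1 - hweight φ β (γ' ∩ c) x) := by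
    rw [hweight_eq_mul_diff_inter φ β γ c, hweight_eq_mul_diff_inter φ β γ' c, ← hagree,
      ← mul_sub, abs_mul, abs_of_nonneg (hweight_nonneg φ β _ x)]
    exact (mul_le_of_le_one_left (abs_nonneg _) (hweight_le_one φ β _ x)).trans
      (abs_sub_le_max_one_sub (hweight_le_one φ β _ x) (hweight_le_one φ β _ x))
  refine (ENNReal.ofReal_le_ofReal hbound).trans ?_
  rw [ENNReal.ofReal_max]
  exact max_le (hpiece γ hγ) (hpiece γ' hγ')

variable {φ} in
lemma integrableOn_hweight (hφ : Measurable (Function.uncurry φ))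
    {γ : Set (EuclideanSpace ℝ (Fin d))} (hγ : γ.Countable) {Λ : Set (EuclideanSpace ℝ (Fin d))}
    (hΛ : volume Λ ≠ ∞) :
    IntegrableOn (hweight φ β γ) Λ :=
  (integrableOn_const hΛ (C := (1 : ℝ))).mono' (measurable_hweight β hφ hγ).aestronglyMeasurable
    (.of_forall fun x ↦ by
      rw [Real.norm_of_nonneg (hweight_nonneg φ β γ x)]
      exact hweight_le_one φ β γ x)

end Weight

section Cube

variable {d : ℕ}

lemma cube_eq_preimage_pi (a : ℝ) (j : Fin d → ℤ) :
    cube d a j = (MeasurableEquiv.toLp 2 (Fin d → ℝ)).symm ⁻¹'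
      Set.univ.pi fun k ↦ Set.Ioc (a * j k - a / 2) (a * j k + a / 2) := by
  ext x
  simp only [cube, Set.mem_ofPred_eq, Set.mem_preimage, Set.mem_univ_pi, Set.mem_Ioc,
    MeasurableEquiv.coe_toLp_symm]
  exact forall_congr' fun k ↦ and_congr (by constructor <;> intro <;> linarith)
    (by constructor <;> intro <;> linarith)

lemma measurableSet_cube (a : ℝ) (j : Fin d → ℤ) : MeasurableSet (cube d a j) := by
  rw [cube_eq_preimage_pi]
  exact (MeasurableSet.univ_pi fun _ ↦ measurableSet_Ioc).preimage (MeasurableEquiv.measurable _)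

lemma volume_cube {a : ℝ} (ha : 0 ≤ a) (j : Fin d → ℤ) :
    volume (cube d a j) = ENNReal.ofReal (a ^ d) := by
  rw [cube_eq_preimage_pi, (EuclideanSpace.volume_preserving_symm_measurableEquiv_toLp
    (Fin d)).measure_preimage (MeasurableSet.univ_pi fun _ ↦ measurableSet_Ioc).nullMeasurableSet,
    volume_pi_pi]
  simp only [Real.volume_Ioc, add_sub_sub_cancel, add_halves, Finset.prod_const,
    Finset.card_univ, Fintype.card_fin, ENNReal.ofReal_pow ha]

lemma norm_sub_lt_of_mem_cube {a : ℝ} (ha : 0 ≤ a) {j : Fin d → ℤ}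
    {y y' : EuclideanSpace ℝ (Fin d)} (hy : y ∈ cube d a j) (hy' : y' ∈ cube d a j)
    (hne : y ≠ y') : ‖y - y'‖ < a * Real.sqrt d := by
  have hd : Nonempty (Fin d) := by
    by_contra h
    exact hne (PiLp.ext fun k ↦ (h ⟨k⟩).elim)
  have hcoord : ∀ k, ‖(y - y') k‖ ^ 2 < a ^ 2 := fun k ↦ by
    have := hy k; have := hy' k
    simp only [Set.mem_Ioc, PiLp.sub_apply, Real.norm_eq_abs, sq_abs] at *
    exact sq_lt_sq' (by linarith) (by linarith)
  rw [EuclideanSpace.norm_eq, ← Real.sqrt_sq ha, ← Real.sqrt_mul' _ (Nat.cast_nonneg d)]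
  refine Real.sqrt_lt_sqrt (by positivity) ?_
  simpa [mul_comm] using Finset.sum_lt_sum_of_nonempty Finset.univ_nonempty fun k _ ↦ hcoord k

lemma Authorised.subsingleton_inter_cube {A : Set (EuclideanSpace ℝ (Fin d))} {α a : ℝ}
    (hball : Metric.ball 0 α ⊆ A) (ha : 0 ≤ a) (haα : a * Real.sqrt d ≤ α)
    {γ : Set (EuclideanSpace ℝ (Fin d))} (hγ : Authorised A γ) (j : Fin d → ℤ) :
    (γ ∩ cube d a j).Subsingleton := by
  intro y hy y' hy'
  by_contra hne
  refine hγ y hy.1 y' hy'.1 hne (hball ?_)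
  rw [mem_ball_zero_iff]
  exact (norm_sub_lt_of_mem_cube ha hy.2 hy'.2 hne).trans_le haα

lemma lintegral_Psi (φ : EuclideanSpace ℝ (Fin d) → EuclideanSpace ℝ (Fin d) → ℝ≥0∞) (β : ℝ)
    {a : ℝ} (ha : 0 ≤ a) (x : EuclideanSpace ℝ (Fin d)) :
    ∫⁻ y, Psi φ β a x y = ENNReal.ofReal (a ^ d) * ∑' j, ⨆ y ∈ cube d a j, mayer φ β x y := by
  unfold Psi
  rw [← ENNReal.tsum_mul_left,
    lintegral_tsum fun j ↦ (measurable_const.indicator (measurableSet_cube a j)).aemeasurable]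
  refine tsum_congr fun j ↦ ?_
  rw [lintegral_indicator_const (measurableSet_cube a j), volume_cube ha, mul_comm]

end Cube

section Specification

variable {d : ℕ} {Λ : Set (EuclideanSpace ℝ (Fin d))} {z : ℝ}

open Classical in
lemma specMeasure_apply (hz : 0 ≤ z) {h : EuclideanSpace ℝ (Fin d) → ℝ} (hh : IntegrableOn h Λ)
    (h0 : 0 ≤ h) {B : Set (Unit ⊕ EuclideanSpace ℝ (Fin d))} (hB : MeasurableSet B) :
    specMeasure Λ z h B = ENNReal.ofReal (((if Sum.inl () ∈ B then 1 else 0) +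
      z * ∫ x in Sum.inr ⁻¹' B ∩ Λ, h x) / (1 + z * ∫ x in Λ, h x)) := by
  have hB' : MeasurableSet (Sum.inr ⁻¹' B : Set (EuclideanSpace ℝ (Fin d))) :=
    hB.preimage measurable_inr
  set e := Real.exp (-z * (volume Λ).toReal)
  set I := ∫ x in Λ, h x
  set J := ∫ x in Sum.inr ⁻¹' B ∩ Λ, h x
  have he : 0 < e := Real.exp_pos _
  have hI : 0 ≤ I := integral_nonneg h0
  have hJ : 0 ≤ J := integral_nonneg h0
  have hD : 0 < 1 + z * I := by positivity
  have hZ : Zpart Λ z h = e * (1 + z * I) := rfl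
  have hdens : ∫⁻ x in Sum.inr ⁻¹' B ∩ Λ, ENNReal.ofReal (z * e * h x / Zpart Λ z h) =
      ENNReal.ofReal (z * J / (1 + z * I)) := by
    rw [← ofReal_integral_eq_lintegral_ofReal
      (((hh.mono_set Set.inter_subset_right).const_mul (z * e)).div_const _)
      (.of_forall fun x ↦ div_nonneg (mul_nonneg (mul_nonneg hz he.le) (h0 x))
        (by rw [hZ]; positivity))]
    rw [integral_div, integral_const_mul, hZ]
    congr 1
    field_simp
    rfl
  rw [specMeasure, Measure.add_apply, Measure.smul_apply, Measure.dirac_apply' _ hB,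
    Measure.map_apply measurable_inr hB, withDensity_apply _ hB', Measure.restrict_restrict hB',
    hdens, hZ, div_mul_cancel_left₀ he.ne', smul_eq_mul, add_div]
  by_cases hmem : Sum.inl () ∈ B
  · rw [Set.indicator_of_mem hmem, if_pos hmem, Pi.one_apply, mul_one,
      ENNReal.ofReal_add (by positivity) (by positivity), one_div]
  · rw [Set.indicator_of_notMem hmem, if_neg hmem, mul_zero, zero_add, zero_div, zero_add]

variable {f g : EuclideanSpace ℝ (Fin d) → ℝ}

/-- With `p = μ_f(B)`: `(μ_f(B) − μ_g(B)) (1 + z ∫_Λ g) = z ∫_Λ (1_B − p) (f − g)`, and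
`|1_B − p| ≤ 1`. -/
lemma specMeasure_apply_sub_le (hz : 0 ≤ z) (hf : IntegrableOn f Λ) (hf0 : 0 ≤ f)
    (hg : IntegrableOn g Λ) (hg0 : 0 ≤ g) {B : Set (Unit ⊕ EuclideanSpace ℝ (Fin d))}
    (hB : MeasurableSet B) :
    specMeasure Λ z f B - specMeasure Λ z g B ≤
      ENNReal.ofReal (z * ∫ x in Λ, |f x - g x|) := by
  classical
  have hS : MeasurableSet (Sum.inr ⁻¹' B : Set (EuclideanSpace ℝ (Fin d))) :=
    hB.preimage measurable_inr
  rw [specMeasure_apply hz hf hf0 hB, specMeasure_apply hz hg hg0 hB]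
  set ε : ℝ := if Sum.inl () ∈ B then 1 else 0
  set S : Set (EuclideanSpace ℝ (Fin d)) := Sum.inr ⁻¹' B
  set I := ∫ x in Λ, f x
  set I' := ∫ x in Λ, g x
  set J := ∫ x in S ∩ Λ, f x
  set J' := ∫ x in S ∩ Λ, g x
  have hε : 0 ≤ ε ∧ ε ≤ 1 := by simp only [ε]; split_ifs <;> norm_num
  have hJ : 0 ≤ J := integral_nonneg hf0
  have hJ' : 0 ≤ J' := integral_nonneg hg0
  have hJI : J ≤ I := setIntegral_mono_set hf (.of_forall hf0)
    (Set.inter_subset_right (s := S)).eventuallyLE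
  have hI' : 0 ≤ I' := integral_nonneg hg0
  have hD : 0 < 1 + z * I := by nlinarith
  set p := (ε + z * J) / (1 + z * I)
  have hp : 0 ≤ p ∧ p ≤ 1 :=
    ⟨by positivity, (div_le_one hD).mpr (by nlinarith)⟩
  have hweighted : J - J' - p * (I - I') ≤ ∫ x in Λ, |f x - g x| := by
    have hfg := hf.sub hg
    have hsplit : J - J' - p * (I - I') =
        ∫ x in Λ, (S.indicator (f - g) x - p * (f - g) x) := by
      rw [integral_sub (hfg.indicator hS) (hfg.const_mul p), integral_indicator hS,
        Measure.restrict_restrict hS, integral_const_mul]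
      simp only [Pi.sub_apply]
      rw [integral_sub hf hg,
        integral_sub (hf.mono_set Set.inter_subset_right) (hg.mono_set Set.inter_subset_right)]
    rw [hsplit]
    refine integral_mono (((hfg.indicator hS).sub (hfg.const_mul p))) hfg.abs fun x ↦ ?_
    have := neg_abs_le (f x - g x)
    have := le_abs_self (f x - g x)
    by_cases hx : x ∈ S
    · simp only [Set.indicator_of_mem hx, Pi.sub_apply]
      nlinarith
    · simp only [Set.indicator_of_notMem hx, Pi.sub_apply]
      nlinarith
  have hp' : 0 ≤ (ε + z * J') / (1 + z * I') := by positivity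
  rw [← ENNReal.ofReal_sub _ hp']
  refine ENNReal.ofReal_le_ofReal ?_
  calc p - (ε + z * J') / (1 + z * I') = z * (J - J' - p * (I - I')) / (1 + z * I') := by
        have hpD : p * (1 + z * I) = ε + z * J := div_mul_cancel₀ _ hD.ne'
        field_simp
        linear_combination hpD
    _ ≤ z * (∫ x in Λ, |f x - g x|) / (1 + z * I') := by gcongr
    _ ≤ z * ∫ x in Λ, |f x - g x| :=
        div_le_self (mul_nonneg hz (integral_nonneg fun _ ↦ abs_nonneg _)) (by nlinarith)

lemma tvEDist_specMeasure_le (hz : 0 ≤ z) (hf : IntegrableOn f Λ) (hf0 : 0 ≤ f)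
    (hg : IntegrableOn g Λ) (hg0 : 0 ≤ g) :
    tvEDist (specMeasure Λ z f) (specMeasure Λ z g) ≤
      ENNReal.ofReal z * ∫⁻ x in Λ, ENNReal.ofReal |f x - g x| := by
  have hfg : IntegrableOn (fun x ↦ |f x - g x|) Λ := (hf.sub hg).abs
  rw [← ofReal_integral_eq_lintegral_ofReal hfg (.of_forall fun _ ↦ abs_nonneg _),
    ← ENNReal.ofReal_mul hz]
  refine iSup_le fun B ↦ sup_le (specMeasure_apply_sub_le hz hf hf0 hg hg0 B.2) ?_
  simpa only [abs_sub_comm] using specMeasure_apply_sub_le hz hg hg0 hf hf0 B.2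

end Specification

noncomputable def dobrushinCoeff {d : ℕ}
    (φ : EuclideanSpace ℝ (Fin d) → EuclideanSpace ℝ (Fin d) → ℝ≥0∞) (β z : ℝ)
    (A : Set (EuclideanSpace ℝ (Fin d))) (a : ℝ) (i j : Fin d → ℤ) : ℝ≥0∞ :=
  sSup {r : ℝ≥0∞ | ∃ γ γ' : Set (EuclideanSpace ℝ (Fin d)),
    γ.Countable ∧ γ'.Countable ∧
    γ ⊆ (cube d a i)ᶜ ∧ γ' ⊆ (cube d a i)ᶜ ∧
    Authorised A γ ∧ Authorised A γ' ∧
    γ \ cube d a j = γ' \ cube d a j ∧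
    r = tvEDist (specMeasure (cube d a i) z (hweight φ β γ))
        (specMeasure (cube d a i) z (hweight φ β γ'))}

lemma dobrushinCoeff_le {d : ℕ} {φ : EuclideanSpace ℝ (Fin d) → EuclideanSpace ℝ (Fin d) → ℝ≥0∞}
    (hφ : Measurable (Function.uncurry φ)) (β : ℝ) {z : ℝ} (hz : 0 ≤ z)
    {A : Set (EuclideanSpace ℝ (Fin d))} {α a : ℝ} (hball : Metric.ball 0 α ⊆ A) (ha : 0 ≤ a)
    (haα : a * Real.sqrt d ≤ α) (i j : Fin d → ℤ) :
    dobrushinCoeff φ β z A a i j ≤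
      ENNReal.ofReal z * ∫⁻ x in cube d a i, ⨆ y ∈ cube d a j, mayer φ β x y := by
  refine sSup_le ?_
  rintro r ⟨γ, γ', hγ, hγ', -, -, hγA, hγ'A, hagree, rfl⟩
  have hΛ : volume (cube d a i) ≠ ∞ := by simp [volume_cube ha]
  refine (tvEDist_specMeasure_le hz (integrableOn_hweight β hφ hγ hΛ) (hweight_nonneg φ β γ)
    (integrableOn_hweight β hφ hγ' hΛ) (hweight_nonneg φ β γ')).trans ?_
  gcongr with x
  exact ofReal_abs_hweight_sub_le φ β hagree (hγA.subsingleton_inter_cube hball ha haα j)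
    (hγ'A.subsingleton_inter_cube hball ha haα j) x

lemma setLIntegral_cube_tsum_iSup_mayer_le {d : ℕ}
    (φ : EuclideanSpace ℝ (Fin d) → EuclideanSpace ℝ (Fin d) → ℝ≥0∞) (β : ℝ) {a : ℝ} (ha : 0 < a)
    (i : Fin d → ℤ) :
    ∫⁻ x in cube d a i, ∑' j, ⨆ y ∈ cube d a j, mayer φ β x y ≤
      ⨆ x, ∫⁻ y, Psi φ β a x y := by
  set V := ENNReal.ofReal (a ^ d)
  have hV : V ≠ 0 := by simp [V, pow_pos ha]
  calc ∫⁻ x in cube d a i, ∑' j, ⨆ y ∈ cube d a j, mayer φ β x y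
      ≤ ∫⁻ _ in cube d a i, (⨆ x, ∫⁻ y, Psi φ β a x y) / V := by
        refine lintegral_mono fun x ↦
          (ENNReal.le_div_iff_mul_le (.inl hV) (.inl ENNReal.ofReal_ne_top)).mpr ?_
        rw [mul_comm, ← lintegral_Psi φ β ha.le x]
        exact le_iSup (fun x ↦ ∫⁻ y, Psi φ β a x y) x
    _ = ⨆ x, ∫⁻ y, Psi φ β a x y := by
        rw [setLIntegral_const, volume_cube ha.le, ENNReal.div_mul_cancel hV ENNReal.ofReal_ne_top]

theorem dobrushin_coefficients_le_general
    {d : ℕ} (φ : EuclideanSpace ℝ (Fin d) → EuclideanSpace ℝ (Fin d) → ℝ≥0∞)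
    (hφ : Measurable (Function.uncurry φ))
    {β : ℝ} {z : ℝ} (hz : 0 < z)
    {α : ℝ} (A : Set (EuclideanSpace ℝ (Fin d)))
    (hball : Metric.ball (0 : EuclideanSpace ℝ (Fin d)) α ⊆ A)
    {a : ℝ} (ha : 0 < a) (haα : a * Real.sqrt d ≤ α)
    (i : Fin d → ℤ) :
    ∑' j : {j : Fin d → ℤ // j ≠ i},
        sSup {r : ℝ≥0∞ | ∃ γ γ' : Set (EuclideanSpace ℝ (Fin d)),
          γ.Countable ∧ γ'.Countable ∧
          γ ⊆ (cube d a i)ᶜ ∧ γ' ⊆ (cube d a i)ᶜ ∧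
          Authorised A γ ∧ Authorised A γ' ∧
          γ \ cube d a (j : Fin d → ℤ) = γ' \ cube d a (j : Fin d → ℤ) ∧
          r = tvEDist (specMeasure (cube d a i) z (hweight φ β γ))
              (specMeasure (cube d a i) z (hweight φ β γ'))} ≤
      ENNReal.ofReal z * ⨆ x : EuclideanSpace ℝ (Fin d), ∫⁻ y, Psi φ β a x y := by
  set M : (Fin d → ℤ) → EuclideanSpace ℝ (Fin d) → ℝ≥0∞ :=
    fun j x ↦ ⨆ y ∈ cube d a j, mayer φ β x y
  calc ∑' j : {j : Fin d → ℤ // j ≠ i}, dobrushinCoeff φ β z A a i j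
      ≤ ∑' j : {j : Fin d → ℤ // j ≠ i}, ENNReal.ofReal z * ∫⁻ x in cube d a i, M j x :=
        ENNReal.tsum_le_tsum fun j ↦ dobrushinCoeff_le hφ β hz.le hball ha.le haα i j
    _ ≤ ENNReal.ofReal z * ∑' j, ∫⁻ x in cube d a i, M j x := by
        rw [ENNReal.tsum_mul_left]
        gcongr
        exact ENNReal.tsum_comp_le_tsum_of_injective Subtype.val_injective _
    _ ≤ ENNReal.ofReal z * ∫⁻ x in cube d a i, ∑' j, M j x := by
        gcongr
        exact tsum_lintegral_le _ _
    _ ≤ ENNReal.ofReal z * ⨆ x, ∫⁻ y, Psi φ β a x y := by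
        gcongr
        exact setLIntegral_cube_tsum_iSup_mayer_le φ β ha i

/-- The sum over `j ≠ i` of the Dobrushin interdependence coefficients `k_{i,j}` of the
discretised continuum hard-core model is bounded by `z · sup_x ∫ Ψ_a(x,y) dy`. -/
theorem dobrushin_coefficients_le
    {d : ℕ} (φ : EuclideanSpace ℝ (Fin d) → EuclideanSpace ℝ (Fin d) → ℝ≥0∞)
    (hφ : Measurable (Function.uncurry φ))
    (hsym : ∀ x y, φ x y = φ y x)
    {β : ℝ} (hβ : 0 < β) {z : ℝ} (hz : 0 < z)
    {α : ℝ} (hα : 0 < α) (A : Set (EuclideanSpace ℝ (Fin d))) (hAmeas : MeasurableSet A)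
    (hball : Metric.ball (0 : EuclideanSpace ℝ (Fin d)) α ⊆ A)
    (hhc : ∀ x y : EuclideanSpace ℝ (Fin d), x - y ∈ A → φ x y = ∞)
    {a : ℝ} (ha : 0 < a) (haα : a * Real.sqrt d ≤ α)
    (i : Fin d → ℤ) :
    ∑' j : {j : Fin d → ℤ // j ≠ i},
        sSup {r : ℝ≥0∞ | ∃ γ γ' : Set (EuclideanSpace ℝ (Fin d)),
          γ.Countable ∧ γ'.Countable ∧
          γ ⊆ (cube d a i)ᶜ ∧ γ' ⊆ (cube d a i)ᶜ ∧
          Authorised A γ ∧ Authorised A γ' ∧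
          γ \ cube d a (j : Fin d → ℤ) = γ' \ cube d a (j : Fin d → ℤ) ∧
          r = tvEDist (specMeasure (cube d a i) z (hweight φ β γ))
              (specMeasure (cube d a i) z (hweight φ β γ'))} ≤
      ENNReal.ofReal z * ⨆ x : EuclideanSpace ℝ (Fin d), ∫⁻ y, Psi φ β a x y :=
  dobrushin_coefficients_le_general φ hφ hz A hball ha haα i
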